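/- arXiv:1809.07566 — 3 statements merged into one kernel-verified Lean document; each statement's English description precedes it below -/
import Mathlib

section
/- The set {z_w : w ∈ V} is dense in V, where z_w denotes the Riesz representative of w (regarded as an element of V' via the L² pairing). -/
/-!
Approximate `ψ'` in `L²(0, L)` by a smooth function `η` with compact support in the open
interval `(0, L)` (a compactly supported continuous approximation on the locally compact space
`(0, L)`, extended by zero and then smoothed without enlarging its support). Then `w = -η'`
vanishes at `0`, and since `η L = 0`, `∫ₓᴸ w = η x`, so `z_w' = η` is `ε`-close to `ψ'`.
-/

open MeasureTheory Set intervalIntegral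
open scoped ENNReal ContDiff

section

variable {E F : Type*} [NormedAddCommGroup E] [NormedSpace ℝ E] [FiniteDimensional ℝ E]
  [MeasurableSpace E] [BorelSpace E] [NormedAddCommGroup F] [NormedSpace ℝ F]

theorem HasCompactSupport.exists_contDiff_support_subset_eLpNorm_sub_le {μ : Measure E}
    [IsFiniteMeasureOnCompacts μ] {p : ℝ≥0∞} (hp : p ≠ ⊤) {f : E → F}
    (hfc : HasCompactSupport f) (hf : Continuous f) {ε : ℝ≥0∞} (hε : ε ≠ 0) :
    ∃ g : E → F, ContDiff ℝ ∞ g ∧ Function.support g ⊆ Function.support f ∧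
      eLpNorm (f - g) p μ ≤ ε := by
  have hμ : μ (tsupport f) ^ (1 / p.toReal) ≠ ⊤ :=
    ENNReal.rpow_ne_top_of_nonneg (by positivity) hfc.measure_lt_top.ne
  obtain ⟨δ, hδ, hδε⟩ := ENNReal.exists_nnreal_pos_mul_lt hμ hε
  obtain ⟨g, hg, hgf, hgs⟩ := hf.exists_contDiff_approx ⊤ (ε := fun _ ↦ (δ : ℝ))
    continuous_const fun _ ↦ hδ
  refine ⟨g, hg, hgs, ?_⟩
  calc eLpNorm (f - g) p μ ≤ ENNReal.ofReal δ * μ (tsupport f) ^ (1 / p.toReal) :=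
        eLpNorm_sub_le_of_dist_bdd μ hp (isClosed_tsupport f).measurableSet δ.2
          (fun x ↦ (dist_comm _ _).trans_le (hgf x).le) (subset_tsupport f)
          (hgs.trans (subset_tsupport f))
    _ ≤ ε := by rw [ENNReal.ofReal_coe_nnreal]; exact hδε.le

theorem MeasureTheory.MemLp.exists_continuous_tsupport_subset_eLpNorm_sub_le {μ : Measure E}
    [μ.Regular] {U : Set E} (hU : IsOpen U) {p : ℝ≥0∞} (hp : p ≠ ⊤) {f : E → F}
    (hf : MemLp f p (μ.restrict U)) {ε : ℝ≥0∞} (hε : ε ≠ 0) :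
    ∃ g : E → F, Continuous g ∧ HasCompactSupport g ∧ tsupport g ⊆ U ∧
      eLpNorm (f - g) p (μ.restrict U) ≤ ε := by
  have hemb : MeasurableEmbedding ((↑) : U → E) := .subtype_coe hU.measurableSet
  have hmap : (μ.comap (↑)).map ((↑) : U → E) = μ.restrict U :=
    map_comap_subtype_coe hU.measurableSet μ
  have := hU.locallyCompactSpace
  have : (μ.comap ((↑) : U → E)).Regular := .comap' μ hU.isOpenEmbedding_subtypeVal
  obtain ⟨g₀, hg₀c, hg₀ε, hg₀, -⟩ :=
    (hemb.memLp_map_measure_iff.1 (hmap ▸ hf)).exists_hasCompactSupport_eLpNorm_sub_le hp hε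
  refine ⟨Subtype.val.extend g₀ 0, hg₀c.continuous_extend_zero hU hg₀,
    hg₀c.extend_zero continuous_subtype_val,
    (hg₀c.tsupport_extend_zero_subset continuous_subtype_val).trans
      (image_subset_iff.2 fun x _ ↦ x.2), ?_⟩
  rw [← hmap, hemb.eLpNorm_map_measure]
  convert hg₀ε using 2
  ext x
  simp

theorem MeasureTheory.MemLp.exists_contDiff_tsupport_subset_eLpNorm_sub_le {μ : Measure E}
    [μ.Regular] {U : Set E} (hU : IsOpen U) {p : ℝ≥0∞} (hp : p ≠ ⊤) (hp₁ : 1 ≤ p) {f : E → F}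
    (hf : MemLp f p (μ.restrict U)) {ε : ℝ≥0∞} (hε : ε ≠ 0) :
    ∃ g : E → F, ContDiff ℝ ∞ g ∧ HasCompactSupport g ∧ tsupport g ⊆ U ∧
      eLpNorm (f - g) p (μ.restrict U) ≤ ε := by
  have hε₂ : ε / 2 ≠ 0 := ENNReal.div_ne_zero.2 ⟨hε, ENNReal.ofNat_ne_top⟩
  obtain ⟨g, hg, hgc, hgU, hfg⟩ := hf.exists_continuous_tsupport_subset_eLpNorm_sub_le hU hp hε₂
  obtain ⟨h, hh, hhg, hgh⟩ :=
    hgc.exists_contDiff_support_subset_eLpNorm_sub_le (μ := μ.restrict U) hp hg hε₂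
  have hht : tsupport h ⊆ tsupport g := closure_mono hhg
  refine ⟨h, hh, hgc.mono hhg, hht.trans hgU, ?_⟩
  calc eLpNorm (f - h) p (μ.restrict U) = eLpNorm ((f - g) + (g - h)) p (μ.restrict U) := by
        rw [sub_add_sub_cancel]
    _ ≤ eLpNorm (f - g) p (μ.restrict U) + eLpNorm (g - h) p (μ.restrict U) :=
        eLpNorm_add_le (hf.1.sub hg.aestronglyMeasurable)
          (hg.aestronglyMeasurable.sub hh.continuous.aestronglyMeasurable) hp₁
    _ ≤ ε / 2 + ε / 2 := add_le_add hfg hgh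
    _ = ε := ENNReal.add_halves ε

end

theorem aestronglyMeasurable_of_hasDerivAt {F : Type*} [NormedAddCommGroup F] [NormedSpace ℝ F]
    [CompleteSpace F]
    {f f' : ℝ → F} {s : Set ℝ} (hs : MeasurableSet s) (hf : ∀ x ∈ s, HasDerivAt f (f' x) x) :
    AEStronglyMeasurable f' (volume.restrict s) :=
  (stronglyMeasurable_deriv f).aestronglyMeasurable.congr <|
    ae_restrict_of_forall_mem hs fun x hx ↦ (hf x hx).deriv

theorem MeasureTheory.MemLp.sqrt_integral_sq_eq {α : Type*} [MeasurableSpace α] {μ : Measure α}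
    {f : α → ℝ} (hf : MemLp f 2 μ) : √(∫ x, f x ^ 2 ∂μ) = (eLpNorm f 2 μ).toReal := by
  rw [hf.eLpNorm_eq_integral_rpow_norm two_ne_zero ENNReal.ofNat_ne_top,
    ENNReal.toReal_ofReal (by positivity), Real.sqrt_eq_rpow]
  simp

theorem density_of_riesz_representatives_general (L : ℝ) (hL : 0 < L)
    (ψ ψ' : ℝ → ℝ)
    (hψ : ∀ x ∈ Set.Icc (0:ℝ) L, HasDerivWithinAt ψ (ψ' x) (Set.Icc 0 L) x)
    (hψ2 : IntervalIntegrable (fun x => (ψ' x) ^ 2) volume 0 L)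
    (ε : ℝ) (hε : 0 < ε) :
    ∃ w w' : ℝ → ℝ,
      (∀ x ∈ Set.Icc (0:ℝ) L, HasDerivWithinAt w (w' x) (Set.Icc 0 L) x) ∧
      w 0 = 0 ∧
      IntervalIntegrable (fun x => (w' x) ^ 2) volume 0 L ∧
      Real.sqrt (∫ x in (0:ℝ)..L, ((∫ t in x..L, w t) - ψ' x) ^ 2) < ε := by
  have hψ'L2 : MemLp ψ' 2 (volume.restrict (Ioo 0 L)) :=
    (memLp_two_iff_integrable_sq (aestronglyMeasurable_of_hasDerivAt measurableSet_Ioo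
      fun x hx ↦ (hψ x (Ioo_subset_Icc_self hx)).hasDerivAt (Icc_mem_nhds hx.1 hx.2))).2
      (hψ2.1.mono_set Ioo_subset_Ioc_self)
  obtain ⟨η, hη, hηc, hηU, hψη⟩ := hψ'L2.exists_contDiff_tsupport_subset_eLpNorm_sub_le
    isOpen_Ioo ENNReal.ofNat_ne_top one_le_two (ENNReal.ofReal_pos.2 (half_pos hε)).ne'
  obtain ⟨hη₁, hη'⟩ := contDiff_infty_iff_deriv.1 hη
  obtain ⟨hη₂, hη''⟩ := contDiff_infty_iff_deriv.1 hη'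
  have hηL : η L = 0 := image_eq_zero_of_notMem_tsupport fun h ↦ (hηU h).2.false
  have hη'0 : deriv η 0 = 0 := deriv_of_notMem_tsupport fun h ↦ (hηU h).1.false
  have hrepr : ∀ x, ∫ t in x..L, -deriv η t = η x := fun x ↦ by
    rw [intervalIntegral.integral_neg, integral_deriv_eq_sub (fun t _ ↦ hη₁ t)
      (hη'.continuous.intervalIntegrable _ _), hηL, zero_sub, neg_neg]
  refine ⟨fun x ↦ -deriv η x, fun x ↦ -deriv (deriv η) x,
    fun x _ ↦ (hη₂ x).hasDerivAt.neg.hasDerivWithinAt, by simp [hη'0],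
    (hη''.continuous.neg.pow 2).intervalIntegrable _ _, ?_⟩
  have hηL2 : MemLp η 2 (volume.restrict (Ioo 0 L)) :=
    hη.continuous.memLp_of_hasCompactSupport hηc |>.restrict _
  simp only [hrepr]
  rw [integral_of_le hL.le, integral_Ioc_eq_integral_Ioo,
    MemLp.sqrt_integral_sq_eq (f := fun x ↦ η x - ψ' x) (hηL2.sub hψ'L2)]
  calc (eLpNorm (η - ψ') 2 (volume.restrict (Ioo 0 L))).toReal
      = (eLpNorm (ψ' - η) 2 (volume.restrict (Ioo 0 L))).toReal := by rw [eLpNorm_sub_comm]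
    _ ≤ ε / 2 := ENNReal.toReal_le_of_le_ofReal (half_pos hε).le hψη
    _ < ε := half_lt_self hε

/-- Density of `{z_w : w ∈ V}` in `V`: for every `ψ ∈ V` and `ε > 0` there exists
`w ∈ V` whose Riesz representative `z_w` (characterized by `z_w(0) = 0` and
`z_w'(x) = ∫ₓᴸ w`) satisfies `‖z_w − ψ‖_V < ε`. -/
theorem density_of_riesz_representatives (L : ℝ) (hL : 0 < L)
    (ψ ψ' : ℝ → ℝ)
    (hψ : ∀ x ∈ Set.Icc (0:ℝ) L, HasDerivWithinAt ψ (ψ' x) (Set.Icc 0 L) x)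
    (hψ0 : ψ 0 = 0)
    (hψ2 : IntervalIntegrable (fun x => (ψ' x) ^ 2) volume 0 L)
    (ε : ℝ) (hε : 0 < ε) :
    ∃ w w' : ℝ → ℝ,
      (∀ x ∈ Set.Icc (0:ℝ) L, HasDerivWithinAt w (w' x) (Set.Icc 0 L) x) ∧
      w 0 = 0 ∧
      IntervalIntegrable (fun x => (w' x) ^ 2) volume 0 L ∧
      Real.sqrt (∫ x in (0:ℝ)..L, ((∫ t in x..L, w t) - ψ' x) ^ 2) < ε :=
  density_of_riesz_representatives_general L hL ψ ψ' hψ hψ2 ε hε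
end

section
/- Let W be C³ satisfying W(x,s) ≥ −K₀ and ∂_s W(x,s)s ≥ W(x,s) − K₁, and let u be a weak solution of u̇ = (−u'' + ∂_s W(x,u))'' − β u' on (0,L)×(0,T) with initial datum u₀ ∈ V, satisfying the energy equality (d/dt)ℰ(u(t)) + ‖μ(t)‖_V² = −β ∫₀ᴸ u'(x,t) μ(x,t) dx, where ℰ(v) = ½∫₀ᴸ|v'|² dx + ∫₀ᴸ W(x,v) dx and μ = −u'' + ∂_s W(x,u). Then for all t ∈ [0,T]: ℰ(u(t)) ≤ (ℰ(u₀) + L K₀) e^{β²L²T} − L K₀, and consequently ‖u(t)‖_V² ≤ 2(ℰ(u₀) + L K₀) e^{β²L²T}. -/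
/-!
Write `φ = ℰ(u) + L K₀ ≥ ½‖u‖_V²`. By the energy equality `φ` decreases at the rate
`‖μ‖_V² + β ∫ u' μ`. Since `μ(0) = 0`, the pointwise Poincaré bound `μ(x)² ≤ L ‖μ‖_V²` and
Young's inequality give `β ∫ u' μ ≥ -½ ‖μ‖_V² - (β²L²/2) ‖u‖_V² ≥ -½ ‖μ‖_V² - β²L² φ`, so
`φ(t) ≤ φ(0) + β²L² ∫₀ᵗ φ`, and Grönwall's lemma yields `φ(t) ≤ φ(0) e^{β²L²t}`.
-/

open MeasureTheory Set intervalIntegral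

section

variable {f g g' : ℝ → ℝ} {a b : ℝ}

theorem aestronglyMeasurable_restrict_Ioc_of_hasDerivWithinAt
    (hd : ∀ x ∈ Icc a b, HasDerivWithinAt g (g' x) (Icc a b) x) :
    AEStronglyMeasurable g' (volume.restrict (Ioc a b)) := by
  rw [Measure.restrict_congr_set Ioo_ae_eq_Ioc.symm]
  exact (measurable_deriv g).aestronglyMeasurable.congr <|
    (ae_restrict_mem measurableSet_Ioo).mono fun x hx =>
      ((hd x (Ioo_subset_Icc_self hx)).hasDerivAt (Icc_mem_nhds hx.1 hx.2)).deriv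

theorem IntervalIntegrable.of_sq (hab : a ≤ b)
    (hf : AEStronglyMeasurable f (volume.restrict (Ioc a b)))
    (hf2 : IntervalIntegrable (fun x => f x ^ 2) volume a b) :
    IntervalIntegrable f volume a b := by
  rw [intervalIntegrable_iff_integrableOn_Ioc_of_le hab] at hf2 ⊢
  exact ((memLp_two_iff_integrable_sq hf).2 hf2).integrable one_le_two

theorem sq_integral_le_mul_integral_sq (hab : a ≤ b) (hf : IntervalIntegrable f volume a b)
    (hf2 : IntervalIntegrable (fun x => f x ^ 2) volume a b) :
    (∫ x in a..b, f x) ^ 2 ≤ (b - a) * ∫ x in a..b, f x ^ 2 := by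
  have hquad : ∀ c : ℝ, 0 ≤ (b - a) * (c * c) + (-2 * ∫ x in a..b, f x) * c
      + ∫ x in a..b, f x ^ 2 := by
    intro c
    have h : 0 ≤ ∫ x in a..b, (f x - c) ^ 2 :=
      intervalIntegral.integral_nonneg hab fun x _ => sq_nonneg _
    have hexp : ∀ x, (f x - c) ^ 2 = f x ^ 2 - 2 * c * f x + c * c := fun x => by ring
    simp only [hexp] at h
    rw [intervalIntegral.integral_add (hf2.sub (hf.const_mul _)) intervalIntegrable_const,
      intervalIntegral.integral_sub hf2 (hf.const_mul _), intervalIntegral.integral_const_mul,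
      intervalIntegral.integral_const, smul_eq_mul] at h
    linarith
  have hdiscrim := discrim_le_zero hquad
  rw [discrim] at hdiscrim
  linarith

theorem sq_sub_le_mul_integral_sq_deriv (hab : a ≤ b)
    (hd : ∀ x ∈ Icc a b, HasDerivWithinAt g (g' x) (Icc a b) x)
    (hg'2 : IntervalIntegrable (fun x => g' x ^ 2) volume a b) :
    (g b - g a) ^ 2 ≤ (b - a) * ∫ x in a..b, g' x ^ 2 := by
  have hg' : IntervalIntegrable g' volume a b :=
    .of_sq hab (aestronglyMeasurable_restrict_Ioc_of_hasDerivWithinAt hd) hg'2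
  rw [← integral_eq_sub_of_hasDeriv_right_of_le hab (fun x hx => (hd x hx).continuousWithinAt)
    (fun x hx => (hd x (Ioo_subset_Icc_self hx)).mono_of_mem_nhdsWithin
      (Icc_mem_nhdsGT_of_mem (Ioo_subset_Ico_self hx))) hg']
  exact sq_integral_le_mul_integral_sq hab hg' hg'2

theorem sq_sub_le_mul_integral_sq_deriv_of_mem_Icc
    (hd : ∀ x ∈ Icc a b, HasDerivWithinAt g (g' x) (Icc a b) x)
    (hg'2 : IntervalIntegrable (fun x => g' x ^ 2) volume a b) {x : ℝ} (hx : x ∈ Icc a b) :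
    (g x - g a) ^ 2 ≤ (b - a) * ∫ y in a..b, g' y ^ 2 := calc
  (g x - g a) ^ 2 ≤ (x - a) * ∫ y in a..x, g' y ^ 2 :=
    sq_sub_le_mul_integral_sq_deriv hx.1
      (fun y hy => (hd y ⟨hy.1, hy.2.trans hx.2⟩).mono (Icc_subset_Icc_right hx.2))
      (hg'2.mono_set (uIcc_subset_uIcc_left (mem_uIcc_of_le hx.1 hx.2)))
  _ ≤ (b - a) * ∫ y in a..b, g' y ^ 2 := by
    gcongr
    · exact intervalIntegral.integral_nonneg hx.1 fun y _ => sq_nonneg _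
    · exact sub_nonneg.2 (hx.1.trans hx.2)
    · exact hx.2
    · exact intervalIntegral.integral_mono_interval le_rfl hx.1 hx.2
        (Filter.Eventually.of_forall fun y => sq_nonneg _) hg'2

theorem neg_le_integral_sq_deriv_add_mul_integral_mul (β : ℝ) (hab : a < b)
    (hf : AEStronglyMeasurable f (volume.restrict (Ioc a b)))
    (hf2 : IntervalIntegrable (fun x => f x ^ 2) volume a b) (hga : g a = 0)
    (hd : ∀ x ∈ Icc a b, HasDerivWithinAt g (g' x) (Icc a b) x)
    (hg'2 : IntervalIntegrable (fun x => g' x ^ 2) volume a b) :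
    -(β ^ 2 * (b - a) ^ 2 / 2 * ∫ x in a..b, f x ^ 2)
      ≤ (∫ x in a..b, g' x ^ 2) + β * ∫ x in a..b, f x * g x := by
  set ℓ := b - a with hℓdef
  set M := ∫ x in a..b, g' x ^ 2
  have hℓ : 0 < ℓ := sub_pos.2 hab
  have hM : 0 ≤ M := intervalIntegral.integral_nonneg hab.le fun x _ => sq_nonneg _
  have hfg : IntervalIntegrable (fun x => f x * g x) volume a b :=
    (IntervalIntegrable.of_sq hab.le hf hf2).mul_continuousOn <| by
      rw [uIcc_of_le hab.le]; exact fun x hx => (hd x hx).continuousWithinAt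
  -- Young's inequality `β f g ≥ -(β²ℓ²/2) f² - g²/(2ℓ²)`, then Poincaré `g² ≤ ℓ M`
  have hpt : ∀ x ∈ Icc a b, -(β ^ 2 * ℓ ^ 2 / 2) * f x ^ 2 - M / (2 * ℓ) ≤ β * (f x * g x) := by
    intro x hx
    have hgx : g x ^ 2 ≤ ℓ * M := by
      simpa [hga] using sq_sub_le_mul_integral_sq_deriv_of_mem_Icc hd hg'2 hx
    have hg : g x ^ 2 / (2 * ℓ ^ 2) ≤ M / (2 * ℓ) := by
      rw [div_le_div_iff₀ (by positivity) (by positivity)]; nlinarith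
    have hyoung : 0 ≤ (β * ℓ ^ 2 * f x + g x) ^ 2 / (2 * ℓ ^ 2) := by positivity
    have hexp : (β * ℓ ^ 2 * f x + g x) ^ 2 / (2 * ℓ ^ 2)
        = β ^ 2 * ℓ ^ 2 / 2 * f x ^ 2 + β * (f x * g x) + g x ^ 2 / (2 * ℓ ^ 2) := by
      field_simp; ring
    linarith
  have hint := intervalIntegral.integral_mono_on hab.le
    ((hf2.const_mul _).sub intervalIntegrable_const) (hfg.const_mul β) hpt
  rw [intervalIntegral.integral_sub (hf2.const_mul _) intervalIntegrable_const,
    intervalIntegral.integral_const_mul, intervalIntegral.integral_const,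
    intervalIntegral.integral_const_mul, smul_eq_mul,
    show (b - a) * (M / (2 * ℓ)) = M / 2 by rw [← hℓdef]; field_simp] at hint
  linarith

end

theorem add_mul_gronwallBound_zero (A C x : ℝ) :
    A + C * gronwallBound 0 C A x = A * Real.exp (C * x) := by
  rcases eq_or_ne C 0 with rfl | hC
  · simp
  · rw [gronwallBound_of_K_ne_0 hC]
    field_simp
    ring

theorem le_mul_exp_of_le_add_mul_integral {φ : ℝ → ℝ} {A C a b : ℝ} (hC : 0 ≤ C)
    (hφ : ContinuousOn φ (Icc a b)) (h : ∀ t ∈ Icc a b, φ t ≤ A + C * ∫ s in a..t, φ s) :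
    ∀ t ∈ Icc a b, φ t ≤ A * Real.exp (C * (t - a)) := by
  intro t ht
  have hint : IntervalIntegrable φ volume a b := hφ.intervalIntegrable_of_Icc (ht.1.trans ht.2)
  have hP : ContinuousOn (fun t => ∫ s in a..t, φ s) (Icc a b) :=
    (continuousOn_primitive_interval' hint left_mem_uIcc).mono Icc_subset_uIcc
  have hP' : ∀ x ∈ Ico a b, HasDerivWithinAt (fun t => ∫ s in a..t, φ s) (φ x) (Ici x) x :=
    fun x hx => integral_hasDerivWithinAt_right
      (hint.mono_set (uIcc_subset_uIcc_left (mem_uIcc_of_le hx.1 hx.2.le)))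
      ⟨Icc a b, Icc_mem_nhdsGT_of_mem hx, hφ.aestronglyMeasurable measurableSet_Icc⟩
      ((hφ x (Ico_subset_Icc_self hx)).mono_of_mem_nhdsWithin (Icc_mem_nhdsGT_of_mem hx))
  have hPbound := le_gronwallBound_of_liminf_deriv_right_le (δ := 0) (K := C) (ε := A) hP
    (fun x hx _ hr => (hP' x hx).liminf_right_slope_le hr) (by simp)
    (fun x hx => by linarith [h x (Ico_subset_Icc_self hx)]) t ht
  calc φ t ≤ A + C * ∫ s in a..t, φ s := h t ht
    _ ≤ A + C * gronwallBound 0 C A (t - a) := by gcongr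
    _ = A * Real.exp (C * (t - a)) := add_mul_gronwallBound_zero A C _

theorem le_mul_exp_of_eq_sub_integral {E D : ℝ → ℝ} {C a b : ℝ} (hC : 0 ≤ C)
    (hD : IntervalIntegrable D volume a b) (hE : ∀ t ∈ Icc a b, E t = E a - ∫ s in a..t, D s)
    (hDE : ∀ t ∈ Icc a b, -C * E t ≤ D t) :
    ∀ t ∈ Icc a b, E t ≤ E a * Real.exp (C * (t - a)) := by
  have hEc : ContinuousOn E (Icc a b) :=
    (continuousOn_const.sub ((continuousOn_primitive_interval' hD left_mem_uIcc).mono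
      Icc_subset_uIcc)).congr hE
  refine le_mul_exp_of_le_add_mul_integral hC hEc fun t ht => ?_
  have hsub : Icc a t ⊆ Icc a b := Icc_subset_Icc_right ht.2
  have hmono := integral_mono_on ht.1
    (((hEc.mono hsub).intervalIntegrable_of_Icc ht.1).const_mul (-C))
    (hD.mono_set (uIcc_subset_uIcc_left (mem_uIcc_of_le ht.1 ht.2)))
    fun s hs => hDE s (hsub hs)
  rw [intervalIntegral.integral_const_mul] at hmono
  linarith [hE t ht]

theorem energy_a_priori_bound_general (L T β K₀ : ℝ) (hL : 0 < L)
    (W : ℝ → ℝ → ℝ)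
    (hW : ContDiff ℝ 3 (fun p : ℝ × ℝ => W p.1 p.2))
    (hWlb : ∀ x s : ℝ, -K₀ ≤ W x s)
    (u u1 μ μ1 : ℝ → ℝ → ℝ) (E : ℝ → ℝ)
    (hdu : ∀ t ∈ Set.Icc (0:ℝ) T, ∀ x ∈ Set.Icc (0:ℝ) L,
      HasDerivWithinAt (u t) (u1 t x) (Set.Icc 0 L) x)
    (hμ0 : ∀ t ∈ Set.Icc (0:ℝ) T, μ t 0 = 0)
    (hdμ : ∀ t ∈ Set.Icc (0:ℝ) T, ∀ x ∈ Set.Icc (0:ℝ) L,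
      HasDerivWithinAt (μ t) (μ1 t x) (Set.Icc 0 L) x)
    (hintu1 : ∀ t ∈ Set.Icc (0:ℝ) T, IntervalIntegrable (fun x => (u1 t x) ^ 2)
      MeasureTheory.volume 0 L)
    (hintμ1 : ∀ t ∈ Set.Icc (0:ℝ) T, IntervalIntegrable (fun x => (μ1 t x) ^ 2)
      MeasureTheory.volume 0 L)
    (hEdef : ∀ t ∈ Set.Icc (0:ℝ) T,
      E t = (1/2) * (∫ x in (0:ℝ)..L, (u1 t x) ^ 2) + ∫ x in (0:ℝ)..L, W x (u t x))
    (hintE : IntervalIntegrable (fun s =>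
        (∫ x in (0:ℝ)..L, (μ1 s x) ^ 2) + β * ∫ x in (0:ℝ)..L, u1 s x * μ s x)
      MeasureTheory.volume 0 T)
    (hEnergyEq : ∀ t ∈ Set.Icc (0:ℝ) T,
      E t = E 0 - ∫ s in (0:ℝ)..t,
        ((∫ x in (0:ℝ)..L, (μ1 s x) ^ 2) + β * ∫ x in (0:ℝ)..L, u1 s x * μ s x)) :
    ∀ t ∈ Set.Icc (0:ℝ) T,
      E t ≤ (E 0 + L * K₀) * Real.exp (β ^ 2 * L ^ 2 * T) - L * K₀ ∧
      (∫ x in (0:ℝ)..L, (u1 t x) ^ 2)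
        ≤ 2 * (E 0 + L * K₀) * Real.exp (β ^ 2 * L ^ 2 * T) := by
  intro t ht
  have hpot : ∀ s ∈ Icc 0 T, -(L * K₀) ≤ ∫ x in (0:ℝ)..L, W x (u s x) := fun s hs => by
    have hcont : ContinuousOn (fun x => W x (u s x)) (Icc 0 L) :=
      hW.continuous.comp_continuousOn
        (continuousOn_id.prodMk fun x hx => (hdu s hs x hx).continuousWithinAt)
    simpa using integral_mono_on hL.le (intervalIntegrable_const (μ := volume))
      (hcont.intervalIntegrable_of_Icc hL.le) fun x _ => hWlb x (u s x)
  have hgrad : ∀ s ∈ Icc 0 T, ∫ x in (0:ℝ)..L, u1 s x ^ 2 ≤ 2 * (E s + L * K₀) :=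
    fun s hs => by linarith [hEdef s hs, hpot s hs]
  have hdiss : ∀ s ∈ Icc 0 T, -(β ^ 2 * L ^ 2) * (E s + L * K₀)
      ≤ (∫ x in (0:ℝ)..L, μ1 s x ^ 2) + β * ∫ x in (0:ℝ)..L, u1 s x * μ s x := fun s hs => by
    have h := neg_le_integral_sq_deriv_add_mul_integral_mul β hL
      (aestronglyMeasurable_restrict_Ioc_of_hasDerivWithinAt (hdu s hs)) (hintu1 s hs)
      (hμ0 s hs) (hdμ s hs) (hintμ1 s hs)
    rw [sub_zero] at h
    linarith [mul_le_mul_of_nonneg_left (hgrad s hs) (by positivity : 0 ≤ β ^ 2 * L ^ 2 / 2)]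
  have hgrowth := le_mul_exp_of_eq_sub_integral (E := fun s => E s + L * K₀) (by positivity)
    hintE (fun s hs => by simp only [hEnergyEq s hs]; ring) hdiss t ht
  have hE0 : 0 ≤ E 0 + L * K₀ := by
    have hnonneg : 0 ≤ ∫ x in (0:ℝ)..L, u1 0 x ^ 2 :=
      intervalIntegral.integral_nonneg hL.le fun x _ => sq_nonneg _
    linarith [hgrad 0 ⟨le_rfl, ht.1.trans ht.2⟩]
  have hbound : E t + L * K₀ ≤ (E 0 + L * K₀) * Real.exp (β ^ 2 * L ^ 2 * T) :=
    hgrowth.trans (by gcongr; linarith [ht.2])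
  exact ⟨by linarith, by linarith [hgrad t ht]⟩

/-- Remark 5.1 (a priori bound): if `u` is a weak solution of
`u̇ = (−u'' + ∂ₛW(x,u))'' − βu'` satisfying the energy equality
`d/dt ℰ(u(t)) + ‖μ(t)‖_V² = −β∫₀ᴸ u' μ` (written in integrated form), where
`ℰ(v) = ½∫₀ᴸ|v'|² + ∫₀ᴸ W(x,v)`, `μ = −u'' + ∂ₛW(x,u) ∈ V`, and `W ≥ −K₀`,
`∂ₛW(x,s)s ≥ W(x,s) − K₁`, then
`ℰ(u(t)) ≤ (ℰ(u₀) + LK₀)e^{β²L²T} − LK₀` and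
`‖u(t)‖_V² ≤ 2(ℰ(u₀) + LK₀)e^{β²L²T}` for all `t ∈ [0,T]`. -/
theorem energy_a_priori_bound (L T β K₀ K₁ : ℝ) (hL : 0 < L) (hT : 0 < T)
    (hβ : 0 ≤ β) (hK₀ : 0 < K₀) (hK₁ : 0 < K₁)
    (W Ws : ℝ → ℝ → ℝ)
    (hW : ContDiff ℝ 3 (fun p : ℝ × ℝ => W p.1 p.2))
    (hWs : ∀ x s : ℝ, HasDerivAt (fun r => W x r) (Ws x s) s)
    (hWlb : ∀ x s : ℝ, -K₀ ≤ W x s)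
    (hWstr : ∀ x s : ℝ, W x s - K₁ ≤ Ws x s * s)
    (u u1 u2 μ μ1 : ℝ → ℝ → ℝ) (E : ℝ → ℝ) (u0 : ℝ → ℝ)
    (hdu : ∀ t ∈ Set.Icc (0:ℝ) T, ∀ x ∈ Set.Icc (0:ℝ) L,
      HasDerivWithinAt (u t) (u1 t x) (Set.Icc 0 L) x)
    (hdu1 : ∀ t ∈ Set.Icc (0:ℝ) T, ∀ x ∈ Set.Icc (0:ℝ) L,
      HasDerivWithinAt (u1 t) (u2 t x) (Set.Icc 0 L) x)
    (hbc : ∀ t ∈ Set.Icc (0:ℝ) T, u t 0 = 0)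
    (hinit : ∀ x ∈ Set.Icc (0:ℝ) L, u 0 x = u0 x)
    (hμdef : ∀ t ∈ Set.Icc (0:ℝ) T, ∀ x ∈ Set.Icc (0:ℝ) L,
      μ t x = -(u2 t x) + Ws x (u t x))
    (hμ0 : ∀ t ∈ Set.Icc (0:ℝ) T, μ t 0 = 0)
    (hdμ : ∀ t ∈ Set.Icc (0:ℝ) T, ∀ x ∈ Set.Icc (0:ℝ) L,
      HasDerivWithinAt (μ t) (μ1 t x) (Set.Icc 0 L) x)
    (hintu1 : ∀ t ∈ Set.Icc (0:ℝ) T, IntervalIntegrable (fun x => (u1 t x) ^ 2)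
      MeasureTheory.volume 0 L)
    (hintμ1 : ∀ t ∈ Set.Icc (0:ℝ) T, IntervalIntegrable (fun x => (μ1 t x) ^ 2)
      MeasureTheory.volume 0 L)
    (hEdef : ∀ t ∈ Set.Icc (0:ℝ) T,
      E t = (1/2) * (∫ x in (0:ℝ)..L, (u1 t x) ^ 2) + ∫ x in (0:ℝ)..L, W x (u t x))
    (hintE : IntervalIntegrable (fun s =>
        (∫ x in (0:ℝ)..L, (μ1 s x) ^ 2) + β * ∫ x in (0:ℝ)..L, u1 s x * μ s x)
      MeasureTheory.volume 0 T)
    (hEnergyEq : ∀ t ∈ Set.Icc (0:ℝ) T,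
      E t = E 0 - ∫ s in (0:ℝ)..t,
        ((∫ x in (0:ℝ)..L, (μ1 s x) ^ 2) + β * ∫ x in (0:ℝ)..L, u1 s x * μ s x)) :
    ∀ t ∈ Set.Icc (0:ℝ) T,
      E t ≤ (E 0 + L * K₀) * Real.exp (β ^ 2 * L ^ 2 * T) - L * K₀ ∧
      (∫ x in (0:ℝ)..L, (u1 t x) ^ 2)
        ≤ 2 * (E 0 + L * K₀) * Real.exp (β ^ 2 * L ^ 2 * T) :=
  energy_a_priori_bound_general L T β K₀ hL W hW hWlb u u1 μ μ1 E hdu hμ0 hdμ hintu1 hintμ1 hEdef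
    hintE hEnergyEq
end

section
/- Let W be C³ with W(x,s) ≥ −K₀ and ∂_s W(x,s)s ≥ W(x,s) − K₁. Let u ∈ V ∩ H³(0,L) with u'(L)=0, and set μ := −u'' + ∂_s W(·,u) ∈ V. Then ℰ(u) ≤ (L⁴/2)‖μ‖_V² + K₁ L, where ℰ(u) = ½∫₀ᴸ|u'|² dx + ∫₀ᴸ W(x,u) dx. -/
/-!
The structural inequality gives `W(x, u) ≤ ∂ₛW(x, u) u + K₁ = (μ + u'') u + K₁`, and integrating
by parts with `u(0) = 0`, `u'(L) = 0` turns `∫ u'' u` into `-∫ u'²`. It remains to bound `∫ μ u`: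
both `μ` and `u` vanish at `0`, so `‖μ‖_∞ ≤ ∫ |μ'| ≤ (L ∫ μ'²)^(1/2)` and likewise for `u`, whence
`∫ μ u ≤ L² ‖μ‖_V ‖u‖_V ≤ (L⁴/2) ‖μ‖_V² + ½ ‖u‖_V²`.
-/

open MeasureTheory Set intervalIntegral

section

variable {f f' f'' g g' : ℝ → ℝ} {a b : ℝ}

theorem intervalIntegrable_deriv_of_sq (hab : a ≤ b)
    (hf : ∀ x ∈ Icc a b, HasDerivWithinAt f (f' x) (Icc a b) x)
    (hf'2 : IntervalIntegrable (fun x => f' x ^ 2) volume a b) :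
    IntervalIntegrable f' volume a b := by
  rw [intervalIntegrable_iff_integrableOn_Ioo_of_le hab] at hf'2 ⊢
  have hmeas : AEStronglyMeasurable f' (volume.restrict (Ioo a b)) := by
    refine (aestronglyMeasurable_deriv f _).congr ((ae_restrict_iff' measurableSet_Ioo).2 ?_)
    refine .of_forall fun x hx => ?_
    exact ((hf x (Ioo_subset_Icc_self hx)).hasDerivAt (Icc_mem_nhds hx.1 hx.2)).deriv
  exact ((memLp_two_iff_integrable_sq hmeas).2 hf'2).integrable one_le_two

theorem sq_integral_abs_le (hab : a ≤ b) (hf : IntervalIntegrable f volume a b)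
    (hf2 : IntervalIntegrable (fun x => f x ^ 2) volume a b) :
    (∫ x in a..b, |f x|) ^ 2 ≤ (b - a) * ∫ x in a..b, f x ^ 2 := by
  set P := ∫ x in a..b, |f x|
  -- integrate `2 c |f| ≤ c ^ 2 + f ^ 2`, then take `c = P / (b - a)`
  have hc : ∀ c : ℝ, 2 * c * P ≤ (b - a) * c ^ 2 + ∫ x in a..b, f x ^ 2 := by
    intro c
    calc 2 * c * P = ∫ x in a..b, 2 * c * |f x| := (intervalIntegral.integral_const_mul _ _).symm
      _ ≤ ∫ x in a..b, (c ^ 2 + f x ^ 2) := by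
          refine integral_mono_on hab (hf.abs.const_mul _) (intervalIntegrable_const.add hf2)
            fun x _ => ?_
          nlinarith [sq_nonneg (c - |f x|), sq_abs (f x)]
      _ = (b - a) * c ^ 2 + ∫ x in a..b, f x ^ 2 := by
          rw [integral_add intervalIntegrable_const hf2, intervalIntegral.integral_const,
            smul_eq_mul]
  rcases hab.eq_or_lt with rfl | hlt
  · simp [P]
  · have h := hc (P / (b - a))
    have hba : 0 < b - a := sub_pos.2 hlt
    field_simp at h
    nlinarith

theorem abs_sub_le_integral_abs_deriv
    (hf : ∀ x ∈ Icc a b, HasDerivWithinAt f (f' x) (Icc a b) x)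
    (hf' : IntervalIntegrable f' volume a b) {x : ℝ} (hx : x ∈ Icc a b) :
    |f x - f a| ≤ ∫ t in a..b, |f' t| := by
  have hsub : Icc a x ⊆ Icc a b := Icc_subset_Icc_right hx.2
  have hftc : ∫ t in a..x, f' t = f x - f a :=
    integral_eq_sub_of_hasDeriv_right_of_le hx.1
      (fun t ht => (hf t (hsub ht)).continuousWithinAt.mono hsub)
      (fun t ht => ((hf t ⟨ht.1.le, ht.2.le.trans hx.2⟩).hasDerivAt
        (Icc_mem_nhds ht.1 (ht.2.trans_le hx.2))).hasDerivWithinAt)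
      (hf'.mono_set (by rwa [uIcc_of_le hx.1, uIcc_of_le (hx.1.trans hx.2)]))
  calc |f x - f a| = |∫ t in a..x, f' t| := by rw [hftc]
    _ ≤ ∫ t in a..x, |f' t| := abs_integral_le_integral_abs hx.1
    _ ≤ ∫ t in a..b, |f' t| :=
        integral_mono_interval le_rfl hx.1 hx.2 (.of_forall fun _ => abs_nonneg _) hf'.abs

theorem integral_mul_le_of_sq_integrable_deriv (hab : a ≤ b)
    (hf : ∀ x ∈ Icc a b, HasDerivWithinAt f (f' x) (Icc a b) x)
    (hg : ∀ x ∈ Icc a b, HasDerivWithinAt g (g' x) (Icc a b) x) (hfa : f a = 0) (hga : g a = 0)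
    (hf'2 : IntervalIntegrable (fun x => f' x ^ 2) volume a b)
    (hg'2 : IntervalIntegrable (fun x => g' x ^ 2) volume a b) :
    ∫ x in a..b, f x * g x ≤
      (b - a) ^ 4 / 2 * (∫ x in a..b, f' x ^ 2) + 1 / 2 * ∫ x in a..b, g' x ^ 2 := by
  have hf' := intervalIntegrable_deriv_of_sq hab hf hf'2
  have hg' := intervalIntegrable_deriv_of_sq hab hg hg'2
  set P := ∫ x in a..b, |f' x|
  set Q := ∫ x in a..b, |g' x|
  have hP : P ^ 2 ≤ (b - a) * ∫ x in a..b, f' x ^ 2 := sq_integral_abs_le hab hf' hf'2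
  have hQ : Q ^ 2 ≤ (b - a) * ∫ x in a..b, g' x ^ 2 := sq_integral_abs_le hab hg' hg'2
  have hQ0 : 0 ≤ Q := integral_nonneg hab fun _ _ => abs_nonneg _
  have hfg : ContinuousOn (fun x => f x * g x) (uIcc a b) := by
    rw [uIcc_of_le hab]
    exact ContinuousOn.mul (fun x hx => (hf x hx).continuousWithinAt)
      fun x hx => (hg x hx).continuousWithinAt
  have hPQ : ∫ x in a..b, f x * g x ≤ (b - a) * (P * Q) := by
    calc ∫ x in a..b, f x * g x ≤ ∫ _ in a..b, P * Q := by
          refine integral_mono_on hab hfg.intervalIntegrable intervalIntegrable_const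
            fun x hx => ?_
          have hfx := abs_sub_le_integral_abs_deriv hf hf' hx
          have hgx := abs_sub_le_integral_abs_deriv hg hg' hx
          rw [hfa, sub_zero] at hfx
          rw [hga, sub_zero] at hgx
          calc f x * g x ≤ |f x| * |g x| := by rw [← abs_mul]; exact le_abs_self _
            _ ≤ P * Q := mul_le_mul hfx hgx (abs_nonneg _) ((abs_nonneg _).trans hfx)
      _ = (b - a) * (P * Q) := by rw [intervalIntegral.integral_const, smul_eq_mul]
  have hM : 0 ≤ ∫ x in a..b, f' x ^ 2 := integral_nonneg hab fun _ _ => sq_nonneg _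
  have hI : 0 ≤ ∫ x in a..b, g' x ^ 2 := integral_nonneg hab fun _ _ => sq_nonneg _
  rcases hab.eq_or_lt with rfl | hlt
  · simp only [sub_self] at hPQ ⊢
    nlinarith
  · have hL : 0 < b - a := sub_pos.2 hlt
    set L := b - a
    set M := ∫ x in a..b, f' x ^ 2
    set I := ∫ x in a..b, g' x ^ 2
    have hAMGM : L * (2 * (L * (P * Q))) ≤ L * (L ^ 4 * M + I) := by
      nlinarith [sq_nonneg (L ^ 2 * P - Q), pow_nonneg hL.le 4]
    linarith [le_of_mul_le_mul_left hAMGM hL]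

theorem integral_mul_second_deriv_eq_neg_integral_sq (hab : a ≤ b)
    (hf : ∀ x ∈ Icc a b, HasDerivWithinAt f (f' x) (Icc a b) x)
    (hf' : ∀ x ∈ Icc a b, HasDerivWithinAt f' (f'' x) (Icc a b) x)
    (hf'int : IntervalIntegrable f' volume a b) (hf''int : IntervalIntegrable f'' volume a b)
    (hfa : f a = 0) (hf'b : f' b = 0) :
    ∫ x in a..b, f x * f'' x = -∫ x in a..b, f' x ^ 2 := by
  rw [← uIcc_of_le hab] at hf hf'
  rw [integral_mul_deriv_eq_deriv_mul_of_hasDerivWithinAt hf hf' hf'int hf''int, hfa, hf'b]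
  simp [sq]

end

theorem energy_bounded_by_mu_general (L K₁ : ℝ) (hL : 0 < L)
    (W Ws : ℝ → ℝ → ℝ)
    (hW : ContDiff ℝ 3 (fun p : ℝ × ℝ => W p.1 p.2))
    (hWstr : ∀ x s : ℝ, W x s - K₁ ≤ Ws x s * s)
    (u u1 u2 μ μ1 : ℝ → ℝ)
    (hdu : ∀ x ∈ Set.Icc (0:ℝ) L, HasDerivWithinAt u (u1 x) (Set.Icc 0 L) x)
    (hdu1 : ∀ x ∈ Set.Icc (0:ℝ) L, HasDerivWithinAt u1 (u2 x) (Set.Icc 0 L) x)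
    (hu2cont : ContinuousOn u2 (Set.Icc 0 L))
    (hu0 : u 0 = 0) (hu1L : u1 L = 0)
    (hμdef : ∀ x ∈ Set.Icc (0:ℝ) L, μ x = -(u2 x) + Ws x (u x))
    (hμ0 : μ 0 = 0)
    (hdμ : ∀ x ∈ Set.Icc (0:ℝ) L, HasDerivWithinAt μ (μ1 x) (Set.Icc 0 L) x)
    (hintμ1 : IntervalIntegrable (fun x => (μ1 x) ^ 2) MeasureTheory.volume 0 L) :
    (1/2) * (∫ x in (0:ℝ)..L, (u1 x) ^ 2) + (∫ x in (0:ℝ)..L, W x (u x))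
      ≤ (L ^ 4 / 2) * (∫ x in (0:ℝ)..L, (μ1 x) ^ 2) + K₁ * L := by
  have hint {g : ℝ → ℝ} (hg : ContinuousOn g (Icc 0 L)) : IntervalIntegrable g volume 0 L :=
    hg.intervalIntegrable_of_Icc hL.le
  have hucont : ContinuousOn u (Icc 0 L) := fun x hx => (hdu x hx).continuousWithinAt
  have hu1cont : ContinuousOn u1 (Icc 0 L) := fun x hx => (hdu1 x hx).continuousWithinAt
  have hμucont : ContinuousOn (fun x => μ x * u x) (Icc 0 L) :=
    ContinuousOn.mul (fun x hx => (hdμ x hx).continuousWithinAt) hucont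
  have huu2cont : ContinuousOn (fun x => u x * u2 x) (Icc 0 L) := hucont.mul hu2cont
  have hμu : ∫ x in (0:ℝ)..L, μ x * u x ≤
      L ^ 4 / 2 * (∫ x in (0:ℝ)..L, μ1 x ^ 2) + 1 / 2 * ∫ x in (0:ℝ)..L, u1 x ^ 2 := by
    simpa using integral_mul_le_of_sq_integrable_deriv hL.le hdμ hdu hμ0 hu0 hintμ1
      (hint (hu1cont.pow 2))
  have huu2 : ∫ x in (0:ℝ)..L, u x * u2 x = -∫ x in (0:ℝ)..L, u1 x ^ 2 :=
    integral_mul_second_deriv_eq_neg_integral_sq hL.le hdu hdu1 (hint hu1cont) (hint hu2cont)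
      hu0 hu1L
  have hWu : ∫ x in (0:ℝ)..L, W x (u x) ≤
      ∫ x in (0:ℝ)..L, (μ x * u x + u x * u2 x + K₁) := by
    refine integral_mono_on hL.le
      (hint (hW.continuous.comp_continuousOn (continuousOn_id.prodMk hucont)))
      ((hint (hμucont.add huu2cont)).add intervalIntegrable_const) fun x hx => ?_
    have := hWstr x (u x)
    rw [hμdef x hx]
    linarith
  rw [intervalIntegral.integral_add
      (hint (hμucont.add huu2cont) : IntervalIntegrable (fun x => μ x * u x + u x * u2 x) _ _ _)
      intervalIntegrable_const,
    intervalIntegral.integral_add (hint hμucont) (hint huu2cont), huu2,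
    intervalIntegral.integral_const, smul_eq_mul, sub_zero] at hWu
  linarith

/-- Estimate (5.2): for `u ∈ V ∩ H³(0,L)` with `u'(L) = 0` and
`μ = −u'' + ∂ₛW(·,u) ∈ V`, under the structural assumptions `W ≥ −K₀` and
`∂ₛW(x,s)s ≥ W(x,s) − K₁`, one has `ℰ(u) ≤ (L⁴/2)‖μ‖_V² + K₁L`, where
`ℰ(u) = ½∫₀ᴸ|u'|² + ∫₀ᴸ W(x,u)`. -/
theorem energy_bounded_by_mu (L K₀ K₁ : ℝ) (hL : 0 < L) (hK₀ : 0 < K₀)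
    (hK₁ : 0 < K₁) (W Ws : ℝ → ℝ → ℝ)
    (hW : ContDiff ℝ 3 (fun p : ℝ × ℝ => W p.1 p.2))
    (hWs : ∀ x s : ℝ, HasDerivAt (fun r => W x r) (Ws x s) s)
    (hWlb : ∀ x s : ℝ, -K₀ ≤ W x s)
    (hWstr : ∀ x s : ℝ, W x s - K₁ ≤ Ws x s * s)
    (u u1 u2 μ μ1 : ℝ → ℝ)
    (hdu : ∀ x ∈ Set.Icc (0:ℝ) L, HasDerivWithinAt u (u1 x) (Set.Icc 0 L) x)
    (hdu1 : ∀ x ∈ Set.Icc (0:ℝ) L, HasDerivWithinAt u1 (u2 x) (Set.Icc 0 L) x)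
    (hu2cont : ContinuousOn u2 (Set.Icc 0 L))
    (hu0 : u 0 = 0) (hu1L : u1 L = 0)
    (hμdef : ∀ x ∈ Set.Icc (0:ℝ) L, μ x = -(u2 x) + Ws x (u x))
    (hμ0 : μ 0 = 0)
    (hdμ : ∀ x ∈ Set.Icc (0:ℝ) L, HasDerivWithinAt μ (μ1 x) (Set.Icc 0 L) x)
    (hintμ1 : IntervalIntegrable (fun x => (μ1 x) ^ 2) MeasureTheory.volume 0 L) :
    (1/2) * (∫ x in (0:ℝ)..L, (u1 x) ^ 2) + (∫ x in (0:ℝ)..L, W x (u x))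
      ≤ (L ^ 4 / 2) * (∫ x in (0:ℝ)..L, (μ1 x) ^ 2) + K₁ * L :=
  energy_bounded_by_mu_general L K₁ hL W Ws hW hWstr u u1 u2 μ μ1 hdu hdu1 hu2cont hu0 hu1L hμdef
    hμ0 hdμ hintμ1
end
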